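/- arXiv:math/0602456 — 2 statements merged into one kernel-verified Lean document; each statement's English description precedes it below -/
import Mathlib

section
/- For every normalized fully binary string s of length n (a string over {0,1} containing both symbols, with no two adjacent symbols equal), the flip grouping distance satisfies d_g(s) = n − 2. -/
/-- Prefix reversal (flip) of the first `i` symbols of `s`. -/
def pflip (i : ℕ) (s : List ℕ) : List ℕ := (s.take i).reverse ++ s.drop i

/-- One flip step: `t` is obtained from `s` by some flip `f^(i)` with `1 ≤ i ≤ |s|`. -/
def FlipStep (s t : List ℕ) : Prop := ∃ i, 1 ≤ i ∧ i ≤ s.length ∧ t = pflip i s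

/-- `ReachIn m s t`: `t` can be obtained from `s` by exactly `m` flips. -/
def ReachIn : ℕ → List ℕ → List ℕ → Prop
  | 0 => fun s t => s = t
  | (m+1) => fun s t => ∃ u, FlipStep s u ∧ ReachIn m u t

/-- Flip distance: minimum number of flips transforming `s` into `t`. -/
noncomputable def flipDist (s t : List ℕ) : ℕ := sInf {m | ReachIn m s t}

/-- Two strings are compatible if every symbol occurs equally often in both. -/
def Compatible (s t : List ℕ) : Prop := ∀ a, s.count a = t.count a

/-- A string is fully `k`-ary if the set of symbols occurring in it is exactly `{0,…,k-1}`. -/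
def FullyKary (k : ℕ) (s : List ℕ) : Prop := ∀ a, a ∈ s ↔ a < k

/-- A string is normalized if no two adjacent symbols are equal. -/
def Normalized (s : List ℕ) : Prop := s.Chain' (· ≠ ·)

/-- A string is grouped if the occurrences of each symbol are consecutive. -/
def Grouped (s : List ℕ) : Prop :=
  ∀ i j l : Fin s.length, i < j → j < l → s.get i = s.get l → s.get j = s.get i

/-- Flip grouping distance: minimum number of flips transforming `s` into some grouped string. -/
noncomputable def groupDist (s : List ℕ) : ℕ := sInf {m | ∃ t, Grouped t ∧ ReachIn m s t}

/-- Flip sorting distance: flip distance from `s` to its non-descending rearrangement `I(s)`. -/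
noncomputable def sortDist (s : List ℕ) : ℕ := flipDist s (s.insertionSort (· ≤ ·))

/-- `rep w m` is the concatenation of `m` copies of the string `w`. -/
def rep (w : List ℕ) (m : ℕ) : List ℕ := (List.replicate m w).flatten

/-! A flip reverses a prefix, which preserves the breakpoints (adjacent pairs of distinct symbols)
inside the prefix and inside the rest; only the adjacency at the cut can change, so a flip removes at
most one breakpoint. A grouped binary string has at most one breakpoint and a normalized string of
length `n` has `n - 1`, hence at least `n - 2` flips are needed. Conversely, a binary string with at
least two breakpoints has the form `a w b a z` with `b ≠ a`; flipping the prefix `a w b` puts the two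
copies of `a` side by side and removes exactly one breakpoint. -/

open scoped List

section BreakCount

variable {α : Type*} [DecidableEq α]

def breakCount : List α → ℕ
  | a :: b :: l => breakCount (b :: l) + if a = b then 0 else 1
  | _ => 0

@[simp] theorem breakCount_nil : breakCount ([] : List α) = 0 := rfl

@[simp] theorem breakCount_singleton (a : α) : breakCount [a] = 0 := rfl

@[simp] theorem breakCount_cons_cons (a b : α) (l : List α) :
    breakCount (a :: b :: l) = breakCount (b :: l) + if a = b then 0 else 1 := rfl

theorem breakCount_append_cons : ∀ (u : List α) (a : α) (v : List α),
    breakCount (u ++ a :: v) = breakCount (u ++ [a]) + breakCount (a :: v)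
  | [], _, _ => by simp
  | [x], a, v => by simp; omega
  | x :: y :: u, a, v => by
    have ih := breakCount_append_cons (y :: u) a v
    simp only [List.cons_append, breakCount_cons_cons] at ih ⊢
    omega

theorem breakCount_concat_le (u : List α) (a : α) : breakCount (u ++ [a]) ≤ breakCount u + 1 := by
  rcases List.eq_nil_or_concat u with rfl | ⟨L, b, rfl⟩
  · simp
  · rw [List.concat_eq_append, List.append_assoc, List.singleton_append,
      breakCount_append_cons L b [a]]
    simp only [breakCount_cons_cons, breakCount_singleton]
    split <;> omega

theorem breakCount_le_concat (u : List α) (a : α) : breakCount u ≤ breakCount (u ++ [a]) := by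
  rcases List.eq_nil_or_concat u with rfl | ⟨L, b, rfl⟩
  · simp
  · rw [List.concat_eq_append, List.append_assoc, List.singleton_append,
      breakCount_append_cons L b [a]]
    omega

@[simp] theorem breakCount_reverse : ∀ l : List α, breakCount l.reverse = breakCount l
  | [] => rfl
  | [_] => rfl
  | a :: b :: l => by
    rw [List.reverse_cons, List.reverse_cons, List.append_assoc, List.singleton_append,
      breakCount_append_cons, ← List.reverse_cons, breakCount_reverse (b :: l)]
    simp [eq_comm]

theorem breakCount_cons_le (a b : α) (l : List α) :
    breakCount (a :: l) ≤ breakCount (b :: l) + if a = b then 0 else 1 := by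
  cases l with
  | nil => simp
  | cons c l => simp only [breakCount_cons_cons]; split_ifs <;> simp_all; omega

theorem List.Sublist.breakCount_cons_le_cons {l₁ l₂ : List α} (h : l₁ <+ l₂) (a : α) :
    breakCount (a :: l₁) ≤ breakCount (a :: l₂) := by
  induction h generalizing a with
  | slnil => rfl
  | @cons l₁ l₂ b _ ih =>
    calc breakCount (a :: l₁) ≤ breakCount (b :: l₁) + (if a = b then 0 else 1) :=
          breakCount_cons_le a b l₁
      _ ≤ breakCount (a :: b :: l₂) := by rw [breakCount_cons_cons]; have := ih b; omega
  | cons_cons b _ ih => simp only [breakCount_cons_cons]; have := ih b; omega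

theorem List.Sublist.breakCount_le {l₁ l₂ : List α} (h : l₁ <+ l₂) :
    breakCount l₁ ≤ breakCount l₂ := by
  induction h with
  | slnil => rfl
  | @cons l₁ l₂ b _ ih => exact ih.trans (by cases l₂ <;> simp)
  | cons_cons b h _ => exact h.breakCount_cons_le_cons b

theorem breakCount_cons_of_forall_eq {a : α} {l : List α} (h : ∀ x ∈ l, x = a) :
    breakCount (a :: l) = 0 := by
  induction l with
  | nil => rfl
  | cons b l ih =>
    obtain rfl : b = a := h b (by simp)
    simpa using ih fun x hx => h x (by simp [hx])

theorem exists_ne_of_breakCount_cons_pos {a : α} {l : List α} (h : 0 < breakCount (a :: l)) :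
    ∃ x ∈ l, x ≠ a := by
  by_contra! hl
  exact h.ne' (breakCount_cons_of_forall_eq hl)

theorem exists_cons_eq_append_cons_cons_of_mem {a b : α} {l : List α} (ha : a ∈ l) (hb : b ≠ a) :
    ∃ w c z, c ≠ a ∧ b :: l = w ++ c :: a :: z := by
  induction l generalizing b with
  | nil => simp at ha
  | cons d l ih =>
    by_cases hd : d = a
    · exact ⟨[], b, l, hb, by simp [hd]⟩
    · obtain ⟨w, c, z, hc, hl⟩ := ih (List.mem_of_ne_of_mem (Ne.symm hd) ha) hd
      exact ⟨b :: w, c, z, hc, by simp [hl]⟩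

theorem breakCount_eq_length_sub_one {l : List α} (h : l.IsChain (· ≠ ·)) :
    breakCount l = l.length - 1 := by
  induction h with
  | nil => rfl
  | singleton => rfl
  | cons_cons hab _ ih => simp [hab, ih]

end BreakCount

theorem grouped_iff_forall_sublist {t : List ℕ} :
    Grouped t ↔ ∀ a b, [a, b, a] <+ t → b = a := by
  constructor
  · intro hg a b hsub
    obtain ⟨f, hf⟩ := List.sublist_iff_exists_fin_orderEmbedding_get_eq.mp hsub
    have := hg (f 0) (f 1) (f 2) (f.lt_iff_lt.mpr (by simp))
      (f.lt_iff_lt.mpr (by simp [Fin.lt_def])) ((hf 0).symm.trans (hf 2))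
    exact (hf 1).trans (this.trans (hf 0).symm)
  · intro h i j l hij hjl heq
    apply h (t.get i) (t.get j)
    refine List.sublist_iff_exists_fin_orderEmbedding_get_eq.mpr
      ⟨OrderEmbedding.ofStrictMono ![i, j, l] ?_, ?_⟩
    · rw [Fin.strictMono_iff_lt_succ]
      intro k
      fin_cases k <;> assumption
    · have heq' : t[i.1] = t[l.1] := heq
      intro k
      fin_cases k <;> simp [heq']

theorem pflip_perm (i : ℕ) (s : List ℕ) : (pflip i s).Perm s := by
  have h := (List.reverse_perm (s.take i)).append_right (s.drop i)
  rwa [List.take_append_drop] at h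

theorem breakCount_le_pflip_add_one (i : ℕ) (s : List ℕ) :
    breakCount s ≤ breakCount (pflip i s) + 1 := by
  rw [pflip]
  conv_lhs => rw [← List.take_append_drop i s]
  rcases s.drop i with _ | ⟨a, v⟩
  · simp
  · rw [breakCount_append_cons (s.take i) a v, breakCount_append_cons (s.take i).reverse a v]
    have := breakCount_concat_le (s.take i) a
    have := breakCount_le_concat (s.take i).reverse a
    rw [breakCount_reverse] at this
    omega

theorem ReachIn.perm : ∀ {m : ℕ} {s t : List ℕ}, ReachIn m s t → s.Perm t
  | 0, _, _, rfl => List.Perm.refl _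
  | _ + 1, _, _, ⟨_, ⟨i, _, _, rfl⟩, h⟩ => (pflip_perm i _).symm.trans h.perm

theorem ReachIn.breakCount_le :
    ∀ {m : ℕ} {s t : List ℕ}, ReachIn m s t → breakCount s ≤ breakCount t + m
  | 0, _, _, rfl => le_rfl
  | _ + 1, s, _, ⟨_, ⟨i, _, _, rfl⟩, h⟩ => by
    have := breakCount_le_pflip_add_one i s
    have := h.breakCount_le
    omega

theorem exists_eq_cons_append_cons_cons_of_two_le_breakCount :
    ∀ {s : List ℕ}, (∀ x ∈ s, x < 2) → 2 ≤ breakCount s →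
      ∃ a w b z, b ≠ a ∧ s = a :: (w ++ b :: a :: z)
  | x :: y :: l, hs, h => by
    by_cases hxy : x = y
    · subst hxy
      obtain ⟨a, w, b, z, hba, hl⟩ :=
        exists_eq_cons_append_cons_cons_of_two_le_breakCount (s := x :: l) (fun u hu => hs u (by simp [hu]))
          (by simpa using h)
      obtain ⟨hxa, rfl⟩ := List.cons_eq_cons.mp hl
      subst hxa
      exact ⟨x, x :: w, b, z, hba, rfl⟩
    · obtain ⟨u, hu, huy⟩ := exists_ne_of_breakCount_cons_pos (a := y) (l := l)
        (by simp [hxy] at h; omega)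
      have hux : u = x := by
        have := hs u (by simp [hu]); have := hs x (by simp); have := hs y (by simp); omega
      obtain ⟨w, b, z, hbx, hl⟩ := exists_cons_eq_append_cons_cons_of_mem (hux ▸ hu) (Ne.symm hxy)
      exact ⟨x, w, b, z, hbx, by rw [hl]⟩

theorem breakCount_le_one_of_grouped {t : List ℕ} (ht : ∀ x ∈ t, x < 2) (hg : Grouped t) :
    breakCount t ≤ 1 := by
  by_contra! h
  obtain ⟨a, w, b, z, hba, rfl⟩ := exists_eq_cons_append_cons_cons_of_two_le_breakCount ht h
  refine hba (grouped_iff_forall_sublist.mp hg a b ?_)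
  exact .cons_cons a (.trans (by simp) (List.sublist_append_right w _))

theorem grouped_of_breakCount_le_one {t : List ℕ} (h : breakCount t ≤ 1) : Grouped t := by
  refine grouped_iff_forall_sublist.mpr fun a b hsub => ?_
  by_contra hba
  have := hsub.breakCount_le
  simp [hba, Ne.symm hba] at this
  omega

theorem pflip_cons_append_cons_cons (a b : ℕ) (w z : List ℕ) :
    pflip (w.length + 2) (a :: (w ++ b :: a :: z)) = b :: (w.reverse ++ a :: a :: z) := by
  have hs : a :: (w ++ b :: a :: z) = (a :: (w ++ [b])) ++ a :: z := by simp
  rw [pflip, hs, List.take_left' (by simp), List.drop_left' (by simp)]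
  simp

theorem breakCount_pflip_cons_append_cons_cons {a b : ℕ} (w z : List ℕ) (hba : b ≠ a) :
    breakCount (pflip (w.length + 2) (a :: (w ++ b :: a :: z))) + 1 =
      breakCount (a :: (w ++ b :: a :: z)) := by
  have hrev : b :: (w.reverse ++ [a]) = (a :: (w ++ [b])).reverse := by simp
  have hl := breakCount_append_cons (b :: w.reverse) a (a :: z)
  have hr := breakCount_append_cons (a :: w) b (a :: z)
  simp only [List.cons_append, breakCount_cons_cons, if_neg hba, ↓reduceIte] at hl hr
  rw [pflip_cons_append_cons_cons, hl, hr, hrev, breakCount_reverse]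
  omega

theorem exists_reachIn_grouped {s : List ℕ} (hs : ∀ x ∈ s, x < 2) :
    ∃ t, Grouped t ∧ ReachIn (breakCount s - 1) s t := by
  induction hn : breakCount s using Nat.strong_induction_on generalizing s with | _ n ih => ?_
  subst hn
  by_cases h : breakCount s ≤ 1
  · exact ⟨s, grouped_of_breakCount_le_one h, by rw [Nat.sub_eq_zero_of_le h]; rfl⟩
  obtain ⟨a, w, b, z, hba, rfl⟩ := exists_eq_cons_append_cons_cons_of_two_le_breakCount hs (by omega)
  set u := pflip (w.length + 2) (a :: (w ++ b :: a :: z))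
  have hbu : breakCount u + 1 = breakCount (a :: (w ++ b :: a :: z)) :=
    breakCount_pflip_cons_append_cons_cons w z hba
  have hflip : FlipStep (a :: (w ++ b :: a :: z)) u := ⟨w.length + 2, by omega, by simp, rfl⟩
  obtain ⟨t, hgt, hut⟩ :=
    ih (breakCount u) (by omega) (fun x hx => hs x ((pflip_perm _ _).subset hx)) rfl
  refine ⟨t, hgt, ?_⟩
  rw [show breakCount (a :: (w ++ b :: a :: z)) - 1 = (breakCount u - 1) + 1 by omega]
  exact ⟨u, hflip, hut⟩

theorem groupDist_eq_breakCount_sub_one {s : List ℕ} (hs : ∀ x ∈ s, x < 2) :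
    groupDist s = breakCount s - 1 := by
  obtain ⟨t, hgt, hst⟩ := exists_reachIn_grouped hs
  refine le_antisymm (Nat.sInf_le ⟨t, hgt, hst⟩) (le_csInf ⟨_, t, hgt, hst⟩ ?_)
  rintro m ⟨t', hgt', hst'⟩
  have := hst'.breakCount_le
  have := breakCount_le_one_of_grouped (fun x hx => hs x (hst'.perm.symm.subset hx)) hgt'
  omega

theorem grouping_binary (n : ℕ) (s : List ℕ)
    (hlen : s.length = n) (hfull : FullyKary 2 s) (hnorm : Normalized s) :
    groupDist s = n - 2 := by
  rw [groupDist_eq_breakCount_sub_one fun x hx => (hfull x).mp hx,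
    breakCount_eq_length_sub_one hnorm, hlen]
  omega
end

section
/- Every normalized fully ternary string s of length n has flip sorting distance d_s(s) ≥ n − 3. -/
/-!
Count the breakpoints of a string, the adjacent pairs of distinct symbols. A flip of a prefix
only changes the neighbourhood of the cut, so it changes the breakpoint count by at most one.
A normalized string of length `n` has `n - 1` breakpoints, whereas a non-descending string over
`{0, 1, 2}` has at most two; hence at least `n - 3` flips are needed.
-/

section Breakpoints

variable {α : Type*} [DecidableEq α]

def breakpoints : List α → ℕ
  | [] => 0
  | [_] => 0
  | a :: b :: l => (if a = b then 0 else 1) + breakpoints (b :: l)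

@[simp]
lemma breakpoints_nil : breakpoints ([] : List α) = 0 := rfl

@[simp]
lemma breakpoints_singleton (a : α) : breakpoints [a] = 0 := rfl

@[simp]
lemma breakpoints_cons_cons (a b : α) (l : List α) :
    breakpoints (a :: b :: l) = (if a = b then 0 else 1) + breakpoints (b :: l) := rfl

lemma breakpoints_le_breakpoints_cons (a : α) (l : List α) :
    breakpoints l ≤ breakpoints (a :: l) := by
  cases l <;> simp

lemma breakpoints_cons_le (a : α) (l : List α) :
    breakpoints (a :: l) ≤ breakpoints l + 1 := by
  cases l with
  | nil => simp
  | cons b l => rw [breakpoints_cons_cons]; split <;> omega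

lemma breakpoints_append_cons (u : List α) (b : α) (v : List α) :
    breakpoints (u ++ b :: v) = breakpoints (u ++ [b]) + breakpoints (b :: v) := by
  induction u with
  | nil => simp
  | cons a u ih =>
    cases u with
    | nil => simp
    | cons c u => simp only [List.cons_append, breakpoints_cons_cons] at ih ⊢; omega

@[simp]
lemma breakpoints_reverse (l : List α) : breakpoints l.reverse = breakpoints l := by
  induction l with
  | nil => rfl
  | cons a l ih =>
    cases l with
    | nil => rfl
    | cons b l =>
      rw [List.reverse_cons, List.reverse_cons, List.append_assoc, List.singleton_append,
        breakpoints_append_cons, ← List.reverse_cons, ih]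
      simp [eq_comm, Nat.add_comm]

lemma breakpoints_le_breakpoints_concat (u : List α) (b : α) :
    breakpoints u ≤ breakpoints (u ++ [b]) := by
  rw [← breakpoints_reverse (u ++ [b])]
  simpa using breakpoints_le_breakpoints_cons b u.reverse

lemma breakpoints_concat_le (u : List α) (b : α) :
    breakpoints (u ++ [b]) ≤ breakpoints u + 1 := by
  rw [← breakpoints_reverse (u ++ [b])]
  simpa using breakpoints_cons_le b u.reverse

lemma breakpoints_add_breakpoints_le_append (u v : List α) :
    breakpoints u + breakpoints v ≤ breakpoints (u ++ v) := by
  cases v with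
  | nil => simp
  | cons b v =>
    rw [breakpoints_append_cons]
    exact Nat.add_le_add_right (breakpoints_le_breakpoints_concat u b) _

lemma breakpoints_append_le (u v : List α) :
    breakpoints (u ++ v) ≤ breakpoints u + breakpoints v + 1 := by
  cases v with
  | nil => simp
  | cons b v =>
    rw [breakpoints_append_cons]
    have := breakpoints_concat_le u b
    omega

lemma breakpoints_eq_length_sub_one {l : List α} (h : l.IsChain (· ≠ ·)) :
    breakpoints l = l.length - 1 := by
  induction l with
  | nil => rfl
  | cons a l ih =>
    cases l with
    | nil => rfl
    | cons b l =>
      obtain ⟨hab, h⟩ := List.isChain_cons_cons.mp h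
      rw [breakpoints_cons_cons, if_neg hab, ih h]
      simp only [List.length_cons]
      omega

end Breakpoints

/-- Along a non-descending string of naturals every breakpoint raises the value by at least one. -/
lemma breakpoints_add_le_getLast {a : ℕ} {l : List ℕ} (h : (a :: l).IsChain (· ≤ ·)) :
    breakpoints (a :: l) + a ≤ (a :: l).getLast (List.cons_ne_nil a l) := by
  induction l generalizing a with
  | nil => simp
  | cons b l ih =>
    obtain ⟨hab, h⟩ := List.isChain_cons_cons.mp h
    have := ih h
    rw [breakpoints_cons_cons, List.getLast_cons (List.cons_ne_nil b l)]
    split <;> omega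

lemma breakpoints_le_of_isChain_le {k : ℕ} {l : List ℕ} (h : l.IsChain (· ≤ ·))
    (hk : ∀ x ∈ l, x < k) : breakpoints l ≤ k - 1 := by
  cases l with
  | nil => simp
  | cons a l =>
    have := breakpoints_add_le_getLast h
    have := hk _ (List.getLast_mem (List.cons_ne_nil a l))
    omega

lemma breakpoints_le_pflip_add_one (i : ℕ) (s : List ℕ) :
    breakpoints s ≤ breakpoints (pflip i s) + 1 := by
  calc breakpoints s = breakpoints (s.take i ++ s.drop i) := by rw [List.take_append_drop]
    _ ≤ breakpoints (s.take i) + breakpoints (s.drop i) + 1 := breakpoints_append_le _ _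
    _ = breakpoints (s.take i).reverse + breakpoints (s.drop i) + 1 := by rw [breakpoints_reverse]
    _ ≤ breakpoints (pflip i s) + 1 :=
      Nat.add_le_add_right (breakpoints_add_breakpoints_le_append _ _) 1

lemma pflip_length_append (u v : List ℕ) : pflip u.length (u ++ v) = u.reverse ++ v := by
  simp [pflip]

namespace ReachIn

lemma breakpoints_le {m : ℕ} {s t : List ℕ} (h : ReachIn m s t) :
    breakpoints s ≤ breakpoints t + m := by
  induction m generalizing s with
  | zero => cases h; omega
  | succ m ih =>
    obtain ⟨u, ⟨i, -, -, rfl⟩, hu⟩ := h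
    have := breakpoints_le_pflip_add_one i s
    have := ih hu
    omega

lemma trans {m k : ℕ} {s u t : List ℕ} (h₁ : ReachIn m s u) (h₂ : ReachIn k u t) :
    ReachIn (m + k) s t := by
  induction m generalizing s with
  | zero => cases h₁; simpa using h₂
  | succ m ih =>
    obtain ⟨w, hsw, hw⟩ := h₁
    rw [Nat.add_right_comm]
    exact ⟨w, hsw, ih hw⟩

lemma append_right {m : ℕ} {u u' : List ℕ} (h : ReachIn m u u') (v : List ℕ) :
    ReachIn m (u ++ v) (u' ++ v) := by
  induction m generalizing u with
  | zero => cases h; rfl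
  | succ m ih =>
    obtain ⟨w, ⟨i, hi, hiu, rfl⟩, hw⟩ := h
    refine ⟨pflip i u ++ v, ⟨i, hi, by simp; omega, ?_⟩, ih hw⟩
    simp [pflip, List.take_append_of_le_length hiu, List.drop_append_of_le_length hiu]

/-- Two flips bring any symbol to the end: first to the front, then the whole string. -/
lemma move_to_end (p q : List ℕ) (a : ℕ) :
    ReachIn 2 (p ++ a :: q) (q.reverse ++ p ++ [a]) := by
  refine ⟨a :: (p.reverse ++ q), ⟨(p ++ [a]).length, by simp, by simp, ?_⟩,
    q.reverse ++ p ++ [a], ⟨(a :: (p.reverse ++ q)).length, by simp, le_rfl, ?_⟩, rfl⟩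
  · rw [show p ++ a :: q = (p ++ [a]) ++ q by simp, pflip_length_append]
    simp
  · rw [pflip, List.take_length, List.drop_length]
    simp

lemma exists_of_perm {s t : List ℕ} (h : s.Perm t) : ∃ m, ReachIn m s t := by
  induction t using List.reverseRecOn generalizing s with
  | nil => exact ⟨0, h.eq_nil⟩
  | append_singleton t a ih =>
    obtain ⟨p, q, rfl⟩ := List.append_of_mem (h.mem_iff.mpr List.mem_concat_self)
    have hpq : (q.reverse ++ p).Perm t :=
      calc (q.reverse ++ p).Perm (p ++ q) :=
            (List.reverse_perm q |>.append_right p).trans List.perm_append_comm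
        List.Perm _ t :=
            (List.perm_middle.symm.trans (h.trans (List.perm_append_singleton a t))).cons_inv
    obtain ⟨m, hm⟩ := ih hpq
    exact ⟨2 + m, (move_to_end p q a).trans (hm.append_right [a])⟩

end ReachIn

lemma reachIn_flipDist {s t : List ℕ} (h : s.Perm t) : ReachIn (flipDist s t) s t :=
  Nat.sInf_mem (ReachIn.exists_of_perm h)

theorem sorting_ternary_lower_bound (n : ℕ) (s : List ℕ)
    (hlen : s.length = n) (hfull : FullyKary 3 s) (hnorm : Normalized s) :
    n - 3 ≤ sortDist s := by
  have hperm : s.Perm (s.insertionSort (· ≤ ·)) := (List.perm_insertionSort _ s).symm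
  have hsorted : breakpoints (s.insertionSort (· ≤ ·)) ≤ 3 - 1 :=
    breakpoints_le_of_isChain_le (List.pairwise_insertionSort _ s).isChain
      fun x hx => (hfull x).mp (hperm.mem_iff.mpr hx)
  have hflips := (reachIn_flipDist hperm).breakpoints_le
  rw [breakpoints_eq_length_sub_one hnorm, hlen] at hflips
  unfold sortDist
  omega
end
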